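/- If X is a Banach space whose dual X* is acs, then X is acs. More precisely: X is acs if and only if for all x*, y* ∈ S_{X*} and all x, y ∈ S_X, the conditions (x*+y*)(x) = 2 and x*(y) = 1 imply y*(y) = 1. -/

import Mathlib

open Filter Topology

/-- A real Banach space is acs if whenever x, y are unit vectors with ‖x+y‖ = 2 and x* is a
norm-one functional with x*(x) = 1, then x*(y) = 1. -/
def IsAcs (X : Type*) [NormedAddCommGroup X] [NormedSpace ℝ X] : Prop :=
  ∀ x y : X, ‖x‖ = 1 → ‖y‖ = 1 → ‖x + y‖ = 2 →
    ∀ f : StrongDual ℝ X, ‖f‖ = 1 → f x = 1 → f y = 1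

lemma eval_le_one {X : Type*} [NormedAddCommGroup X] [NormedSpace ℝ X]
    (f : StrongDual ℝ X) (x : X) (hf : ‖f‖ = 1) (hx : ‖x‖ = 1) : f x ≤ 1 := by
  have := f.le_opNorm x
  rw [hf, hx, Real.norm_eq_abs] at this
  linarith [le_abs_self (f x)]

theorem acs_of_dual_acs (X : Type*) [NormedAddCommGroup X] [NormedSpace ℝ X] [CompleteSpace X] :
    (IsAcs (StrongDual ℝ X) → IsAcs X) ∧
    (IsAcs X ↔
      ∀ f g : StrongDual ℝ X, ‖f‖ = 1 → ‖g‖ = 1 → ∀ x y : X, ‖x‖ = 1 → ‖y‖ = 1 →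
        (f + g) x = 2 → f y = 1 → g y = 1) := by
  constructor
  · -- dual acs implies acs
    intro h x y hx hy hxy f hf hfx
    -- Hahn-Banach: pick g with ‖g‖ = 1 and g (x+y) = 2
    have hxy0 : x + y ≠ 0 := by
      intro h0
      rw [h0, norm_zero] at hxy
      norm_num at hxy
    obtain ⟨g, hg, hgxy⟩ := exists_dual_vector ℝ (x + y) (norm_ne_zero_iff.mpr hxy0)
    rw [hxy] at hgxy; norm_num at hgxy
    have hgx1 : g x ≤ 1 := eval_le_one g x hg hx
    have hgy1 : g y ≤ 1 := eval_le_one g y hg hy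
    have hsum : g x + g y = 2 := by
      have := map_add g x y
      rw [hgxy] at this; linarith
    have hgx : g x = 1 := by linarith
    have hgy : g y = 1 := by linarith
    -- ‖g + f‖ = 2
    have hgf : ‖g + f‖ = 2 := by
      have hle : ‖g + f‖ ≤ 2 := by
        calc ‖g + f‖ ≤ ‖g‖ + ‖f‖ := norm_add_le g f
        _ = 2 := by rw [hg, hf]; norm_num
      have hge : (2:ℝ) ≤ ‖g + f‖ := by
        have h2 : (g + f) x = 2 := by
          simp only [ContinuousLinearMap.add_apply]; linarith
        have := (g + f).le_opNorm x
        rw [hx, Real.norm_eq_abs, h2, mul_one] at this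
        linarith [le_abs_self (2:ℝ)]
      linarith
    -- evaluation at y as an element of the double dual
    set Φ := NormedSpace.inclusionInDoubleDualLi ℝ (E := X) y with hΦ
    have hΦnorm : ‖Φ‖ = 1 := by
      rw [hΦ, (NormedSpace.inclusionInDoubleDualLi ℝ (E := X)).norm_map, hy]
    have hΦg : Φ g = 1 := hgy
    have := h g f hg hf hgf Φ hΦnorm hΦg
    exact this
  · constructor
    · intro h f g hf hg x y hx hy hfgx hfy
      have hfx1 : f x ≤ 1 := eval_le_one f x hf hx
      have hgx1 : g x ≤ 1 := eval_le_one g x hg hx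
      have hsum : f x + g x = 2 := by
        simpa [ContinuousLinearMap.add_apply] using hfgx
      have hfx : f x = 1 := by linarith
      have hgx : g x = 1 := by linarith
      have hxy : ‖x + y‖ = 2 := by
        have hle : ‖x + y‖ ≤ 2 := by
          calc ‖x + y‖ ≤ ‖x‖ + ‖y‖ := norm_add_le x y
          _ = 2 := by rw [hx, hy]; norm_num
        have h2 : f (x + y) = 2 := by rw [map_add, hfx, hfy]; norm_num
        have := f.le_opNorm (x + y)
        rw [hf, Real.norm_eq_abs, h2, one_mul] at this
        linarith [le_abs_self (2:ℝ)]
      exact h x y hx hy hxy g hg hgx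
    · intro h x y hx hy hxy f hf hfx
      have hxy0 : x + y ≠ 0 := by
        intro h0
        rw [h0, norm_zero] at hxy
        norm_num at hxy
      obtain ⟨g, hg, hgxy⟩ := exists_dual_vector ℝ (x + y) (norm_ne_zero_iff.mpr hxy0)
      rw [hxy] at hgxy; norm_num at hgxy
      have hgx1 : g x ≤ 1 := eval_le_one g x hg hx
      have hgy1 : g y ≤ 1 := eval_le_one g y hg hy
      have hsum : g x + g y = 2 := by
        have := map_add g x y
        rw [hgxy] at this; linarith
      have hgx : g x = 1 := by linarith
      have hgy : g y = 1 := by linarith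
      have hgfx : (g + f) x = 2 := by
        simp only [ContinuousLinearMap.add_apply]; linarith
      exact h g f hg hf x y hx hy hgfx hgy
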